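/- Assume M is geodesic and let x = ((t_i,a_i,b_i))_{i=1}^n and x̂ = ((t̂_i,â_i,b̂_i))_{i=1}^n be dial-a-ride request sequences of the same length n. For every feasible pair (σ, T) for x̂ there exists a feasible pair (σ', T') for x with T' ≤ T + ε_time + 2·ε_pos; consequently Z_D(x) ≤ Z_D(x̂) + ε_time + 2·ε_pos. (Paper's dial-a-ride Lemma: Z^ALG ≤ Z'_{x̂} + ε_time + 2 ε_pos, proved by delaying the predicted route by ε_time and inserting detours of length 2·dist(â_i, a_i) at each predicted pickup and 2·dist(b̂_i, b_i) at each predicted delivery.) -/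

import Mathlib

/-- Feasibility of a pair `(σ, T)` for the dial-a-ride request sequence `x`: the schedule
is 1-Lipschitz, stays at the origin at all times `≤ 0`, ends at the origin at time `T`,
and for each request visits its pickup position (no earlier than its release time) and
afterwards its delivery position (uncapacitated server). -/
def FeasibleD {M : Type*} [MetricSpace M] (o : M) {n : ℕ} (x : Fin n → ℝ × M × M)
    (σ : ℝ → M) (T : ℝ) : Prop :=
  (LipschitzWith 1 σ ∧ ∀ s : ℝ, s ≤ 0 → σ s = o) ∧ 0 ≤ T ∧ σ T = o ∧
    ∀ i : Fin n, ∃ s u : ℝ, (x i).1 ≤ s ∧ s ≤ u ∧ u ≤ T ∧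
      σ s = (x i).2.1 ∧ σ u = (x i).2.2

/-- The optimal offline completion time of the dial-a-ride request sequence `x`. -/
noncomputable def ZD {M : Type*} [MetricSpace M] (o : M) {n : ℕ}
    (x : Fin n → ℝ × M × M) : ℝ :=
  sInf {T : ℝ | ∃ σ : ℝ → M, FeasibleD o x σ T}

/-- The optimal length of a closed dial-a-ride tour for `x`, ignoring release times. -/
noncomputable def LD {M : Type*} [MetricSpace M] (o : M) {n : ℕ}
    (x : Fin n → ℝ × M × M) : ℝ :=
  sInf {S : ℝ | 0 ≤ S ∧ ∃ γ : ℝ → M, LipschitzWith 1 γ ∧ γ 0 = o ∧ γ S = o ∧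
    ∀ i : Fin n, ∃ s u : ℝ, 0 ≤ s ∧ s ≤ u ∧ u ≤ S ∧
      γ s = (x i).2.1 ∧ γ u = (x i).2.2}

/-- `M` is geodesic: any two points are joined by a unit-speed geodesic. -/
def IsGeodesicSpace (M : Type*) [MetricSpace M] : Prop :=
  ∀ a b : M, ∃ γ : ℝ → M, LipschitzWith 1 γ ∧ γ 0 = a ∧ γ (dist a b) = b

/-!
Delay the predicted schedule by `ε_time`, so that every predicted visit happens after the actual
release time. Then, at the time a predicted pickup `â_i` (resp. delivery `b̂_i`) is visited, pause
the schedule and insert a round trip along a geodesic from `â_i` to `a_i` and back; this visits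
`a_i` and costs `2 dist(â_i, a_i)`. Every later event is postponed by that amount, so all other
visits survive, and after `n` pairs of detours the total delay is `ε_time + 2 ε_pos`.
-/

open Finset

theorem Real.sInf_le_sInf_add {S S' : Set ℝ} {c : ℝ} (hS : BddBelow S) (hS' : S'.Nonempty)
    (h : ∀ y ∈ S', ∃ x ∈ S, x ≤ y + c) : sInf S ≤ sInf S' + c := by
  rw [← sub_le_iff_le_add]
  refine le_csInf hS' fun y hy => ?_
  obtain ⟨x, hx, hxy⟩ := h y hy
  linarith [csInf_le hS hx]

noncomputable def delayFrom (s δ r : ℝ) : ℝ :=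
  if r < s then r else r + δ

theorem delayFrom_of_lt {s δ r : ℝ} (h : r < s) : delayFrom s δ r = r :=
  if_pos h

theorem delayFrom_of_le {s δ r : ℝ} (h : s ≤ r) : delayFrom s δ r = r + δ :=
  if_neg h.not_gt

theorem monotone_delayFrom {s δ : ℝ} (hδ : 0 ≤ δ) : Monotone (delayFrom s δ) := by
  intro r r' h
  unfold delayFrom
  split_ifs <;> linarith

theorem le_delayFrom {s δ : ℝ} (hδ : 0 ≤ δ) (r : ℝ) : r ≤ delayFrom s δ r := by
  unfold delayFrom
  split_ifs <;> linarith

theorem Set.piecewise_Iic_apply_of_le {α : Type*} {f g : ℝ → α} {c r : ℝ} (hc : f c = g c)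
    (h : c ≤ r) : (Set.Iic c).piecewise f g r = g r := by
  rcases h.eq_or_lt with rfl | h
  · simp [hc]
  · exact Set.piecewise_eq_of_notMem _ _ _ (not_le.2 h)

theorem LipschitzWith.piecewise_Iic {M : Type*} [PseudoMetricSpace M] {f g : ℝ → M} {c : ℝ}
    (hf : LipschitzWith 1 f) (hg : LipschitzWith 1 g) (hc : f c = g c) :
    LipschitzWith 1 ((Set.Iic c).piecewise f g) := by
  have hf' : ∀ r r', dist (f r) (f r') ≤ dist r r' := fun r r' => by
    simpa using hf.dist_le_mul r r'
  have hg' : ∀ r r', dist (g r) (g r') ≤ dist r r' := fun r r' => by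
    simpa using hg.dist_le_mul r r'
  have cross : ∀ r r', r ≤ c → c ≤ r' → dist (f r) (g r') ≤ dist r r' := fun r r' hr hr' =>
    calc dist (f r) (g r') ≤ dist (f r) (f c) + dist (g c) (g r') := hc ▸ dist_triangle _ _ _
      _ ≤ dist r c + dist c r' := add_le_add (hf' r c) (hg' c r')
      _ = dist r r' := by
        simp only [Real.dist_eq, abs_of_nonpos (sub_nonpos.2 hr), abs_of_nonpos (sub_nonpos.2 hr'),
          abs_of_nonpos (sub_nonpos.2 (hr.trans hr'))]
        ring
  have left : ∀ {r}, r ≤ c → (Set.Iic c).piecewise f g r = f r := fun hr =>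
    Set.piecewise_eq_of_mem _ _ _ hr
  have right : ∀ {r}, c ≤ r → (Set.Iic c).piecewise f g r = g r := fun hr =>
    Set.piecewise_Iic_apply_of_le hc hr
  refine LipschitzWith.mk_one fun r r' => ?_
  rcases le_total r c with hr | hr <;> rcases le_total r' c with hr' | hr'
  · rw [left hr, left hr']
    exact hf' r r'
  · rw [left hr, right hr']
    exact cross r r' hr hr'
  · rw [right hr, left hr', dist_comm, dist_comm r]
    exact cross r' r hr' hr
  · rw [right hr, right hr']
    exact hg' r r'

section

variable {M : Type*}

def Serves (σ : ℝ → M) (T : ℝ) (r : ℝ × M × M) : Prop :=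
  ∃ s u : ℝ, r.1 ≤ s ∧ s ≤ u ∧ u ≤ T ∧ σ s = r.2.1 ∧ σ u = r.2.2

theorem Serves.delay {σ : ℝ → M} {T ε t : ℝ} {r : ℝ × M × M} (h : Serves σ T r)
    (ht : t ≤ r.1 + ε) : Serves (fun r => σ (r - ε)) (T + ε) (t, r.2.1, r.2.2) := by
  obtain ⟨s, u, hrs, hsu, huT, hs, hu⟩ := h
  exact ⟨s + ε, u + ε, by dsimp only; linarith, by linarith, by linarith, by simpa using hs,
    by simpa using hu⟩

/-- Visits at negative times happen at the origin, so they can be moved to time `0`. -/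
theorem Serves.exists_nonneg {o : M} {σ : ℝ → M} {T : ℝ} {r : ℝ × M × M} (h : Serves σ T r)
    (hσ : ∀ s : ℝ, s ≤ 0 → σ s = o) (hT : 0 ≤ T) :
    ∃ s u : ℝ, r.1 ≤ s ∧ 0 ≤ s ∧ s ≤ u ∧ u ≤ T ∧ σ s = r.2.1 ∧ σ u = r.2.2 := by
  obtain ⟨s, u, hrs, hsu, huT, hs, hu⟩ := h
  have hmax : ∀ s, σ (max s 0) = σ s := fun s => by
    rcases le_total s 0 with h | h
    · rw [max_eq_right h, hσ 0 le_rfl, hσ s h]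
    · rw [max_eq_left h]
  exact ⟨max s 0, max u 0, le_max_of_le_left hrs, le_max_right _ _, max_le_max_right _ hsu,
    max_le huT hT, (hmax s).trans hs, (hmax u).trans hu⟩

def IsDelay (σ' σ : ℝ → M) (φ : ℝ → ℝ) : Prop :=
  Monotone φ ∧ (∀ r, r ≤ φ r) ∧ ∀ r, σ' (φ r) = σ r

theorem IsDelay.comp {σ'' σ' σ : ℝ → M} {ψ φ : ℝ → ℝ} (h₂ : IsDelay σ'' σ' ψ)
    (h₁ : IsDelay σ' σ φ) : IsDelay σ'' σ (ψ ∘ φ) :=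
  ⟨h₂.1.comp h₁.1, fun r => (h₁.2.1 r).trans (h₂.2.1 _), fun r => (h₂.2.2 _).trans (h₁.2.2 r)⟩

theorem IsDelay.serves {σ' σ : ℝ → M} {φ : ℝ → ℝ} {T : ℝ} {r : ℝ × M × M}
    (h : IsDelay σ' σ φ) (hr : Serves σ T r) : Serves σ' (φ T) r := by
  obtain ⟨s, u, hrs, hsu, huT, hs, hu⟩ := hr
  exact ⟨φ s, φ u, hrs.trans (h.2.1 s), h.1 hsu, h.1 huT, (h.2.2 s).trans hs, (h.2.2 u).trans hu⟩

variable [MetricSpace M]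

def IsSchedule (o : M) (σ : ℝ → M) : Prop :=
  LipschitzWith 1 σ ∧ ∀ s : ℝ, s ≤ 0 → σ s = o

theorem feasibleD_iff (o : M) {n : ℕ} (x : Fin n → ℝ × M × M) (σ : ℝ → M) (T : ℝ) :
    FeasibleD o x σ T ↔ IsSchedule o σ ∧ 0 ≤ T ∧ σ T = o ∧ ∀ i, Serves σ T (x i) :=
  Iff.rfl

theorem isSchedule_const (o : M) : IsSchedule o fun _ => o :=
  ⟨LipschitzWith.const' o, fun _ _ => rfl⟩

theorem IsSchedule.delay {o : M} {σ : ℝ → M} (hσ : IsSchedule o σ) {ε : ℝ} (hε : 0 ≤ ε) :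
    IsSchedule o fun r => σ (r - ε) :=
  ⟨by simpa [Function.comp_def] using hσ.1.comp (IsometryEquiv.subRight ε).isometry.lipschitz,
    fun _ hs => hσ.2 _ (by linarith)⟩

theorem exists_detour (hgeo : IsGeodesicSpace M) {σ : ℝ → M}
    (hσ : LipschitzWith 1 σ) (s : ℝ) (q : M) :
    ∃ σ' : ℝ → M, LipschitzWith 1 σ' ∧ (∀ r, r ≤ s → σ' r = σ r) ∧
      σ' (s + dist (σ s) q) = q ∧ IsDelay σ' σ (delayFrom s (2 * dist (σ s) q)) := by
  obtain ⟨γ, hγ, hγ0, hγq⟩ := hgeo (σ s) q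
  set d := dist (σ s) q
  have hd : 0 ≤ d := dist_nonneg
  -- the round trip `σ s → q → σ s` along `γ`, run on `[s, s + 2 d]`
  set loop : ℝ → M := fun r => γ (min (r - s) (s + 2 * d - r))
  have hloop : LipschitzWith 1 loop := by
    simpa [Function.comp_def] using hγ.comp ((IsometryEquiv.subRight s).isometry.lipschitz.min
      (IsometryEquiv.subLeft (s + 2 * d)).isometry.lipschitz)
  have hloop_start : loop s = σ s := by simp [loop, hd, hγ0]
  have hloop_end : loop (s + 2 * d) = σ (s + 2 * d - 2 * d) := by simp [loop, hd, hγ0]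
  set resume := (Set.Iic (s + 2 * d)).piecewise loop fun r => σ (r - 2 * d) with hresume_def
  have hresume : LipschitzWith 1 resume := hloop.piecewise_Iic
    (by simpa [Function.comp_def] using hσ.comp (IsometryEquiv.subRight (2 * d)).isometry.lipschitz)
    hloop_end
  have hresume_s : σ s = resume s := by
    rw [hresume_def, Set.piecewise_eq_of_mem _ _ _ (Set.mem_Iic.2 (by linarith)), hloop_start]
  refine ⟨(Set.Iic s).piecewise σ resume, hσ.piecewise_Iic hresume hresume_s,
    fun r hr => Set.piecewise_eq_of_mem _ _ _ hr, ?_,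
    monotone_delayFrom (by positivity), le_delayFrom (by positivity), fun r => ?_⟩
  · rw [Set.piecewise_Iic_apply_of_le hresume_s (by linarith), hresume_def,
      Set.piecewise_eq_of_mem _ _ _ (Set.mem_Iic.2 (by linarith))]
    show γ (min (s + d - s) (s + 2 * d - (s + d))) = q
    rw [show s + 2 * d - (s + d) = s + d - s by ring, min_self, add_sub_cancel_left, hγq]
  · rcases lt_or_ge r s with hr | hr
    · rw [delayFrom_of_lt hr, Set.piecewise_eq_of_mem _ _ _ (Set.mem_Iic.2 hr.le)]
    · rw [delayFrom_of_le hr, Set.piecewise_Iic_apply_of_le hresume_s (by linarith), hresume_def,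
        Set.piecewise_Iic_apply_of_le hloop_end (by linarith), add_sub_cancel_right]

theorem IsSchedule.exists_reroute (hgeo : IsGeodesicSpace M) {o : M}
    {σ : ℝ → M} (hσ : IsSchedule o σ) {T t : ℝ} (hT : 0 ≤ T) {p q : M}
    (hv : Serves σ T (t, p, q)) (a b : M) :
    ∃ σ' φ, IsSchedule o σ' ∧ IsDelay σ' σ φ ∧ φ T = T + 2 * (dist p a + dist q b) ∧
      Serves σ' (φ T) (t, a, b) := by
  obtain ⟨s, u, hts, hs0, hsu, huT, hsp, huq⟩ := hv.exists_nonneg hσ.2 hT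
  have hpa : 0 ≤ dist p a := dist_nonneg
  have hqb : 0 ≤ dist q b := dist_nonneg
  obtain ⟨σ₁, hσ₁, hσ₁_before, hσ₁a, hdelay₁⟩ := exists_detour hgeo hσ.1 s a
  rw [hsp] at hσ₁a hdelay₁
  have hσ₁u : σ₁ (u + 2 * dist p a) = q := by
    rw [← delayFrom_of_le hsu, hdelay₁.2.2, huq]
  obtain ⟨σ₂, hσ₂, hσ₂_before, hσ₂b, hdelay₂⟩ := exists_detour hgeo hσ₁ (u + 2 * dist p a) b
  rw [hσ₁u] at hσ₂b hdelay₂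
  have hφT : (delayFrom (u + 2 * dist p a) (2 * dist q b) ∘ delayFrom s (2 * dist p a)) T =
      T + 2 * (dist p a + dist q b) := by
    rw [Function.comp_apply, delayFrom_of_le (hsu.trans huT), delayFrom_of_le (by linarith)]
    ring
  refine ⟨σ₂, _, ⟨hσ₂, fun r hr => ?_⟩, hdelay₂.comp hdelay₁, hφT, ?_⟩
  · rw [hσ₂_before r (by linarith), hσ₁_before r (by linarith), hσ.2 r hr]
  · rw [hφT]
    exact ⟨s + dist p a, u + 2 * dist p a + dist q b, by dsimp only; linarith, by linarith,
      by linarith, by rw [hσ₂_before _ (by linarith), hσ₁a], hσ₂b⟩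

theorem IsSchedule.exists_feasibleD_of_serves_piecewise (hgeo : IsGeodesicSpace M) {o : M}
    {n : ℕ} (x : Fin n → ℝ × M × M) (p q : Fin n → M)
    (F : Finset (Fin n)) {σ : ℝ → M} {T : ℝ} (hσ : IsSchedule o σ) (hT : 0 ≤ T) (hσT : σ T = o)
    (hv : ∀ i, Serves σ T (F.piecewise (fun i => ((x i).1, p i, q i)) x i)) :
    ∃ σ' T', FeasibleD o x σ' T' ∧
      T' ≤ T + 2 * ∑ i ∈ F, (dist (p i) (x i).2.1 + dist (q i) (x i).2.2) := by
  induction F using Finset.induction_on generalizing σ T with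
  | empty => exact ⟨σ, T, ⟨hσ, hT, hσT, by rwa [Finset.piecewise_empty] at hv⟩, by simp⟩
  | insert a F ha ih =>
    have hva := hv a
    rw [Finset.piecewise_eq_of_mem _ _ _ (mem_insert_self a F)] at hva
    obtain ⟨σ', φ, hσ', hdelay, hφT, hserves⟩ := hσ.exists_reroute hgeo hT hva (x a).2.1 (x a).2.2
    have hv' : ∀ i, Serves σ' (φ T) (F.piecewise (fun i => ((x i).1, p i, q i)) x i) := by
      intro i
      rcases eq_or_ne i a with rfl | hi
      · rwa [F.piecewise_eq_of_notMem _ _ ha]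
      · rw [← Finset.piecewise_insert_of_ne _ _ _ hi]
        exact hdelay.serves (hv i)
    obtain ⟨σ'', T', hfeas, hle⟩ :=
      ih hσ' (hT.trans (hdelay.2.1 T)) (by rw [hdelay.2.2, hσT]) hv'
    refine ⟨σ'', T', hfeas, ?_⟩
    rw [sum_insert ha]
    linarith

theorem IsSchedule.exists_feasibleD_of_serves (hgeo : IsGeodesicSpace M)
    {o : M} {n : ℕ} (x : Fin n → ℝ × M × M) (p q : Fin n → M) {σ : ℝ → M} {T : ℝ}
    (hσ : IsSchedule o σ) (hT : 0 ≤ T) (hσT : σ T = o)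
    (hv : ∀ i, Serves σ T ((x i).1, p i, q i)) :
    ∃ σ' T', FeasibleD o x σ' T' ∧
      T' ≤ T + 2 * ∑ i, (dist (p i) (x i).2.1 + dist (q i) (x i).2.2) :=
  hσ.exists_feasibleD_of_serves_piecewise hgeo x p q univ hT hσT (by simpa using hv)

theorem exists_feasibleD (hgeo : IsGeodesicSpace M) (o : M) {n : ℕ}
    (x : Fin n → ℝ × M × M) : ∃ σ T, FeasibleD o x σ T := by
  set T := ∑ i, |(x i).1|
  have hT : 0 ≤ T := sum_nonneg fun i _ => abs_nonneg _
  have hv : ∀ i, Serves (fun _ => o) T ((x i).1, o, o) := fun i =>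
    ⟨T, T, (le_abs_self _).trans (single_le_sum (fun j _ => abs_nonneg (x j).1) (mem_univ i)),
      le_rfl, le_rfl, rfl, rfl⟩
  obtain ⟨σ, T', hfeas, -⟩ :=
    (isSchedule_const o).exists_feasibleD_of_serves hgeo x _ _ hT rfl hv
  exact ⟨σ, T', hfeas⟩

end

theorem darp_actual_le_predicted_general {M : Type*} [MetricSpace M] (o : M)
    (hgeo : IsGeodesicSpace M) {n : ℕ}
    (x xh : Fin n → ℝ × M × M) :
    (∀ σ T, FeasibleD o xh σ T →
      ∃ σ' T', FeasibleD o x σ' T' ∧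
        T' ≤ T + (⨆ i, |(xh i).1 - (x i).1|) +
          2 * ∑ i, (dist (xh i).2.1 (x i).2.1 + dist (xh i).2.2 (x i).2.2)) ∧
    ZD o x ≤ ZD o xh + (⨆ i, |(xh i).1 - (x i).1|) +
      2 * ∑ i, (dist (xh i).2.1 (x i).2.1 + dist (xh i).2.2 (x i).2.2) := by
  set ε := ⨆ i, |(xh i).1 - (x i).1|
  have hε : 0 ≤ ε := Real.iSup_nonneg fun i => abs_nonneg _
  have hrelease : ∀ i, (x i).1 ≤ (xh i).1 + ε := fun i => by
    have := le_ciSup (Set.finite_range fun i => |(xh i).1 - (x i).1|).bddAbove i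
    linarith [neg_abs_le ((xh i).1 - (x i).1)]
  have reroute : ∀ σ T, FeasibleD o xh σ T → ∃ σ' T', FeasibleD o x σ' T' ∧
      T' ≤ T + ε + 2 * ∑ i, (dist (xh i).2.1 (x i).2.1 + dist (xh i).2.2 (x i).2.2) := by
    intro σ T h
    obtain ⟨hσ, hT, hσT, hserves⟩ := (feasibleD_iff o xh σ T).1 h
    exact (hσ.delay hε).exists_feasibleD_of_serves hgeo x _ _ (by linarith)
      (by simpa using hσT) fun i => (hserves i).delay (hrelease i)
  refine ⟨reroute, ?_⟩
  obtain ⟨σ₀, T₀, h₀⟩ := exists_feasibleD hgeo o xh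
  rw [add_assoc]
  refine Real.sInf_le_sInf_add ⟨0, fun T ⟨_, h⟩ => h.2.1⟩ ⟨T₀, σ₀, h₀⟩ fun T ⟨σ, h⟩ => ?_
  obtain ⟨σ', T', h', hle⟩ := reroute σ T h
  exact ⟨T', ⟨σ', h'⟩, by linarith⟩

/-- From any feasible pair for the predicted dial-a-ride instance `x̂` one obtains a
feasible pair for the actual instance `x` at an extra cost of `ε_time + 2 ε_pos`;
consequently `Z_D(x) ≤ Z_D(x̂) + ε_time + 2 ε_pos`. -/
theorem darp_actual_le_predicted {M : Type*} [MetricSpace M] (o : M)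
    (hgeo : IsGeodesicSpace M) {n : ℕ}
    (x xh : Fin n → ℝ × M × M) (hx : ∀ i, 0 ≤ (x i).1) (hxh : ∀ i, 0 ≤ (xh i).1) :
    (∀ σ T, FeasibleD o xh σ T →
      ∃ σ' T', FeasibleD o x σ' T' ∧
        T' ≤ T + (⨆ i, |(xh i).1 - (x i).1|) +
          2 * ∑ i, (dist (xh i).2.1 (x i).2.1 + dist (xh i).2.2 (x i).2.2)) ∧
    ZD o x ≤ ZD o xh + (⨆ i, |(xh i).1 - (x i).1|) +
      2 * ∑ i, (dist (xh i).2.1 (x i).2.1 + dist (xh i).2.2 (x i).2.2) :=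
  darp_actual_le_predicted_general o hgeo x xh
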